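/- Let ξ = ξ₁ + ξ₂ on ℝ^m with ξ₁ convex differentiable with L-Lipschitz gradient and ξ₂ strongly convex with modulus μ > 0, and let u* be the minimizer of ξ. Suppose u^k minimizes Q(u, û^{k−1}) = ξ₁(û^{k−1}) + ⟨∇ξ₁(û^{k−1}), u − û^{k−1}⟩ + (L_k/2)‖u − û^{k−1}‖² + ξ₂(u) over ℝ^m with 0 < L_k ≤ L, where û^{k−1} = u^{k−1} + ω_{k−1}(u^{k−1} − u^{k−2}) and 0 ≤ ω_{k−1} ≤ 1. Then √(ξ(u^k) − ξ(u*)) ≤ (2L/√μ)(‖u^k − u^{k−1}‖ + ‖u^{k−1} − u^{k−2}‖). -/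

import Mathlib

open scoped RealInnerProductSpace

/-- The subdifferential of `h` at `v`: the set of (global) subgradients. -/
def SubderivAt {m : ℕ} (h : EuclideanSpace ℝ (Fin m) → ℝ)
    (v : EuclideanSpace ℝ (Fin m)) : Set (EuclideanSpace ℝ (Fin m)) :=
  {g | ∀ z, h z ≥ h v + ⟪g, z - v⟫}

/-!
The optimality condition of the proximal step says that
`g = -(∇ξ₁(û) + L_k (u^k - û))` is a subgradient of `ξ₂` at `u^k`. Adding the gradient inequality
of `ξ₁` to the strong-convexity inequality of `ξ₂` at `u^k` gives
`ξ(u^k) - ξ(u*) ≤ ‖r‖ a - μ a² / 2 ≤ ‖r‖² / (2μ)` with `r = ∇ξ₁(u^k) + g` and `a = ‖u^k - u*‖`,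
while `r = ∇ξ₁(u^k) - ∇ξ₁(û) - L_k (u^k - û)` has norm at most `2L ‖u^k - û‖`.
-/

open Filter Set Topology

section

variable {E : Type*} [NormedAddCommGroup E] [InnerProductSpace ℝ E] [CompleteSpace E]

theorem ConvexOn.add_inner_neg_le_of_isMinOn_add {φ h : E → ℝ} {G x : E}
    (hh : ConvexOn ℝ univ h) (hφ : HasGradientAt φ G x) (hmin : IsMinOn (φ + h) univ x)
    (z : E) : h x + ⟪-G, z - x⟫ ≤ h z := by
  have hslope : Tendsto (fun t : ℝ ↦ t⁻¹ • (φ (x + t • (z - x)) - φ x)) (𝓝[>] 0)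
      (𝓝 ⟪G, z - x⟫) :=
    (hφ.hasFDerivAt.hasLineDerivAt (z - x)).tendsto_slope_zero_right
  have hbound : ∀ t ∈ Ioo (0 : ℝ) 1, h x - h z ≤ t⁻¹ • (φ (x + t • (z - x)) - φ x) := by
    rintro t ⟨ht0, ht1⟩
    have hconv : h (x + t • (z - x)) ≤ (1 - t) * h x + t * h z := by
      have := hh.2 (mem_univ x) (mem_univ z) (sub_nonneg.2 ht1.le) ht0.le (by ring)
      rwa [show (1 - t) • x + t • z = x + t • (z - x) by module] at this
    have hle := isMinOn_univ_iff.1 hmin (x + t • (z - x))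
    simp only [Pi.add_apply] at hle
    rw [smul_eq_mul, le_inv_mul_iff₀ ht0]
    linarith
  have hlim := ge_of_tendsto hslope <| by
    filter_upwards [Ioo_mem_nhdsGT zero_lt_one] with t ht using hbound t ht
  rw [inner_neg_left]; linarith

theorem ConvexOn.add_inner_le_of_hasGradientAt {f : E → ℝ} {G x : E}
    (hf : ConvexOn ℝ univ f) (hG : HasGradientAt f G x) (y : E) : f x + ⟪G, y - x⟫ ≤ f y := by
  -- `-f + f = 0` is minimal everywhere, so apply the optimality condition with `φ = -f`.
  have hG' : HasGradientAt (-f) (-G) x := by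
    rw [hasGradientAt_iff_hasFDerivAt, map_neg]; exact hG.hasFDerivAt.neg
  simpa using hf.add_inner_neg_le_of_isMinOn_add hG' (by simp [isMinOn_univ_iff]) y

theorem hasGradientAt_affine_add_norm_sq (c : ℝ) (d b : E) (κ : ℝ) (u : E) :
    HasGradientAt (fun v ↦ c + ⟪d, v - b⟫ + κ / 2 * ‖v - b‖ ^ 2) (d + κ • (u - b)) u := by
  rw [hasGradientAt_iff_hasFDerivAt]
  have h1 : HasFDerivAt (fun v : E ↦ v - b) (ContinuousLinearMap.id ℝ E) u :=
    (hasFDerivAt_id u).sub_const b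
  refine (((hasFDerivAt_const c u).add ((innerSL ℝ d).hasFDerivAt.comp u h1)).add
    (h1.norm_sq.const_mul (κ / 2))).congr_fderiv ?_
  ext w
  simp only [ContinuousLinearMap.comp_id, zero_add, map_sub, add_apply,
    coe_innerSL_apply, smul_apply, sub_apply, nsmul_eq_mul, Nat.cast_ofNat, smul_eq_mul,
    map_add, map_smul, InnerProductSpace.toDual_apply_apply, add_right_inj]
  ring

theorem le_sq_div_of_le_mul_sub_mul_sq {Δ C a μ : ℝ} (hμ : 0 < μ)
    (h : Δ ≤ C * a - μ / 2 * a ^ 2) : Δ ≤ C ^ 2 / (2 * μ) := by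
  rw [le_div_iff₀ (by positivity)]
  nlinarith [sq_nonneg (μ * a - C)]

theorem add_sub_add_le_norm_sq_div {f h : E → ℝ} {G g x y : E} {μ : ℝ} (hμ : 0 < μ)
    (hf : ConvexOn ℝ univ f) (hG : HasGradientAt f G x)
    (hsc : h y - h x ≥ ⟪g, y - x⟫ + μ / 2 * ‖y - x‖ ^ 2) :
    f x + h x - (f y + h y) ≤ ‖G + g‖ ^ 2 / (2 * μ) := by
  apply le_sq_div_of_le_mul_sub_mul_sq hμ (a := ‖x - y‖)
  have hf' := hf.add_inner_le_of_hasGradientAt hG y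
  have hcs := real_inner_le_norm (G + g) (x - y)
  rw [norm_sub_rev, ← neg_sub x y, inner_neg_right] at hsc
  rw [← neg_sub x y, inner_neg_right] at hf'
  rw [inner_add_left] at hcs
  linarith

end

section

variable {E : Type*} [NormedAddCommGroup E] [NormedSpace ℝ E]

theorem norm_sub_sub_smul_le {G : E → E} {L c : ℝ}
    (hG : ∀ u v, ‖G u - G v‖ ≤ L * ‖u - v‖) (hc : |c| ≤ L) (x y : E) :
    ‖G x - G y - c • (x - y)‖ ≤ 2 * L * ‖x - y‖ := by
  calc ‖G x - G y - c • (x - y)‖ ≤ ‖G x - G y‖ + |c| * ‖x - y‖ :=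
        (norm_sub_le _ _).trans_eq (by rw [norm_smul, Real.norm_eq_abs])
    _ ≤ L * ‖x - y‖ + L * ‖x - y‖ := by gcongr; exact hG x y
    _ = 2 * L * ‖x - y‖ := by ring

theorem norm_sub_extrapolate_le {ω : ℝ} (hω₀ : 0 ≤ ω) (hω₁ : ω ≤ 1) (x y z : E) :
    ‖x - (y + ω • (y - z))‖ ≤ ‖x - y‖ + ‖y - z‖ := by
  calc ‖x - (y + ω • (y - z))‖ = ‖(x - y) - ω • (y - z)‖ := by congr 1; module
    _ ≤ ‖x - y‖ + ω * ‖y - z‖ :=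
        (norm_sub_le _ _).trans_eq (by rw [norm_smul, Real.norm_of_nonneg hω₀])
    _ ≤ ‖x - y‖ + ‖y - z‖ := by gcongr; exact mul_le_of_le_one_left (norm_nonneg _) hω₁

end

theorem pg_objective_gap_bound_general (m : ℕ)
    (ξ₁ ξ₂ : EuclideanSpace ℝ (Fin m) → ℝ)
    (gradξ₁ : EuclideanSpace ℝ (Fin m) → EuclideanSpace ℝ (Fin m))
    (L : ℝ)
    (hξ₁conv : ConvexOn ℝ Set.univ ξ₁)
    (hξ₁diff : ∀ u, HasGradientAt ξ₁ (gradξ₁ u) u)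
    (hξ₁lip : ∀ u v, ‖gradξ₁ u - gradξ₁ v‖ ≤ L * ‖u - v‖)
    (μ : ℝ) (hμ : 0 < μ)
    (hξ₂conv : ConvexOn ℝ Set.univ ξ₂)
    (hξ₂sc : ∀ u v g, g ∈ SubderivAt ξ₂ v →
      ξ₂ u - ξ₂ v ≥ ⟪g, u - v⟫ + μ / 2 * ‖u - v‖ ^ 2)
    (ustar : EuclideanSpace ℝ (Fin m))
    (uk ukm1 ukm2 uhat : EuclideanSpace ℝ (Fin m))
    (Lk ω : ℝ) (hLk : 0 < Lk ∧ Lk ≤ L) (hω : 0 ≤ ω ∧ ω ≤ 1)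
    (hhat : uhat = ukm1 + ω • (ukm1 - ukm2))
    (hmin : ∀ v : EuclideanSpace ℝ (Fin m),
      ξ₁ uhat + ⟪gradξ₁ uhat, uk - uhat⟫ + Lk / 2 * ‖uk - uhat‖ ^ 2 + ξ₂ uk ≤
      ξ₁ uhat + ⟪gradξ₁ uhat, v - uhat⟫ + Lk / 2 * ‖v - uhat‖ ^ 2 + ξ₂ v) :
    Real.sqrt ((ξ₁ uk + ξ₂ uk) - (ξ₁ ustar + ξ₂ ustar)) ≤
      2 * L / Real.sqrt μ * (‖uk - ukm1‖ + ‖ukm1 - ukm2‖) := by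
  set g := -(gradξ₁ uhat + Lk • (uk - uhat))
  have hsub : g ∈ SubderivAt ξ₂ uk :=
    hξ₂conv.add_inner_neg_le_of_isMinOn_add (hasGradientAt_affine_add_norm_sq _ _ _ _ _)
      (isMinOn_univ_iff.2 hmin)
  have hgap := add_sub_add_le_norm_sq_div hμ hξ₁conv (hξ₁diff uk) (hξ₂sc ustar uk g hsub)
  have hL : 0 ≤ L := hLk.1.le.trans hLk.2
  have hres : ‖gradξ₁ uk + g‖ ≤ 2 * L * (‖uk - ukm1‖ + ‖ukm1 - ukm2‖) :=
    calc ‖gradξ₁ uk + g‖ = ‖gradξ₁ uk - gradξ₁ uhat - Lk • (uk - uhat)‖ := by congr 1; module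
      _ ≤ 2 * L * ‖uk - uhat‖ :=
        norm_sub_sub_smul_le hξ₁lip (abs_le.2 ⟨by linarith [hLk.1], hLk.2⟩) uk uhat
      _ ≤ 2 * L * (‖uk - ukm1‖ + ‖ukm1 - ukm2‖) := by
        rw [hhat]; gcongr; exact norm_sub_extrapolate_le hω.1 hω.2 uk ukm1 ukm2
  calc Real.sqrt (ξ₁ uk + ξ₂ uk - (ξ₁ ustar + ξ₂ ustar))
      ≤ Real.sqrt (‖gradξ₁ uk + g‖ ^ 2 / (2 * μ)) := Real.sqrt_le_sqrt hgap
    _ = ‖gradξ₁ uk + g‖ / Real.sqrt (2 * μ) := by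
        rw [Real.sqrt_div' _ (by positivity), Real.sqrt_sq (norm_nonneg _)]
    _ ≤ ‖gradξ₁ uk + g‖ / Real.sqrt μ := by gcongr; linarith
    _ ≤ 2 * L / Real.sqrt μ * (‖uk - ukm1‖ + ‖ukm1 - ukm2‖) := by
        rw [div_mul_eq_mul_div]; gcongr

/-- the objective-gap bound
`√(ξ(u^k) - ξ(u*)) ≤ (2L/√μ)(‖u^k - u^{k-1}‖ + ‖u^{k-1} - u^{k-2}‖)`
for one extrapolated proximal-gradient step. -/
theorem pg_objective_gap_bound (m : ℕ)
    (ξ₁ ξ₂ : EuclideanSpace ℝ (Fin m) → ℝ)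
    (gradξ₁ : EuclideanSpace ℝ (Fin m) → EuclideanSpace ℝ (Fin m))
    (L : ℝ) (hL : 0 < L)
    (hξ₁conv : ConvexOn ℝ Set.univ ξ₁)
    (hξ₁diff : ∀ u, HasGradientAt ξ₁ (gradξ₁ u) u)
    (hξ₁lip : ∀ u v, ‖gradξ₁ u - gradξ₁ v‖ ≤ L * ‖u - v‖)
    (μ : ℝ) (hμ : 0 < μ)
    (hξ₂conv : ConvexOn ℝ Set.univ ξ₂)
    (hξ₂sc : ∀ u v g, g ∈ SubderivAt ξ₂ v →
      ξ₂ u - ξ₂ v ≥ ⟪g, u - v⟫ + μ / 2 * ‖u - v‖ ^ 2)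
    (ustar : EuclideanSpace ℝ (Fin m))
    (hstarmin : ∀ v, ξ₁ ustar + ξ₂ ustar ≤ ξ₁ v + ξ₂ v)
    (uk ukm1 ukm2 uhat : EuclideanSpace ℝ (Fin m))
    (Lk ω : ℝ) (hLk : 0 < Lk ∧ Lk ≤ L) (hω : 0 ≤ ω ∧ ω ≤ 1)
    (hhat : uhat = ukm1 + ω • (ukm1 - ukm2))
    (hmin : ∀ v : EuclideanSpace ℝ (Fin m),
      ξ₁ uhat + ⟪gradξ₁ uhat, uk - uhat⟫ + Lk / 2 * ‖uk - uhat‖ ^ 2 + ξ₂ uk ≤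
      ξ₁ uhat + ⟪gradξ₁ uhat, v - uhat⟫ + Lk / 2 * ‖v - uhat‖ ^ 2 + ξ₂ v) :
    Real.sqrt ((ξ₁ uk + ξ₂ uk) - (ξ₁ ustar + ξ₂ ustar)) ≤
      2 * L / Real.sqrt μ * (‖uk - ukm1‖ + ‖ukm1 - ukm2‖) :=
  pg_objective_gap_bound_general m ξ₁ ξ₂ gradξ₁ L hξ₁conv hξ₁diff hξ₁lip μ hμ hξ₂conv hξ₂sc ustar uk
    ukm1 ukm2 uhat Lk ω hLk hω hhat hmin
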